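/- Let m ≥ 3, let d ∈ V, and set ε = +1 if ϑ_0(d) = 0 and ε = −1 if ϑ_0(d) = 1. The simple graph whose vertex set is {a ∈ V : a ≠ 0 and ϑ_d(a) = 0}, with distinct vertices a, b adjacent if and only if ⟨a,b⟩ = 0, is strongly regular with parameters v = (2^m − ε)(2^{m−1} + ε), k = 2(2^{m−1} − ε)(2^{m−2} + ε), λ = 4(2^{m−2} − ε)(2^{m−3} + ε) + 1, μ = (2^{m−1} − ε)(2^{m−2} + ε). (This graph is isomorphic to the orthogonal polar graph Γ(O^ε(2m,2)), whose vertices are the points of the quadric Q^ε(2m−1,2), adjacent when they lie on a totally isotropic line.) -/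
import Mathlib


open Finset

/-- The symplectic bilinear form `⟨u,v⟩ = ∑_{i<m} (u_i v_{m+i} + u_{m+i} v_i)` on `(F_2)^{2m}`. -/
def symp (m : ℕ) (u v : Fin (2*m) → ZMod 2) : ZMod 2 :=
  ∑ i : Fin m, (u ⟨i.1, by omega⟩ * v ⟨m + i.1, by omega⟩ +
    u ⟨m + i.1, by omega⟩ * v ⟨i.1, by omega⟩)

/-- The quadratic form `ϑ_0(u) = ∑_{i<m} u_i u_{m+i}`. -/
def th0 (m : ℕ) (u : Fin (2*m) → ZMod 2) : ZMod 2 :=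
  ∑ i : Fin m, u ⟨i.1, by omega⟩ * u ⟨m + i.1, by omega⟩

/-- The quadratic form `ϑ_a(u) = ϑ_0(u) + ⟨a,u⟩`. -/
def th (m : ℕ) (a u : Fin (2*m) → ZMod 2) : ZMod 2 :=
  th0 m u + symp m a u


lemma symp_comm (m : ℕ) (u v : Fin (2*m) → ZMod 2) : symp m u v = symp m v u := by
  unfold symp; exact Finset.sum_congr rfl fun i _ => by ring

lemma symp_add_left (m : ℕ) (u v w : Fin (2*m) → ZMod 2) :
    symp m (u + v) w = symp m u w + symp m v w := by
  unfold symp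
  rw [← Finset.sum_add_distrib]
  exact Finset.sum_congr rfl fun i _ => by simp [Pi.add_apply]; ring

lemma symp_add_right (m : ℕ) (u v w : Fin (2*m) → ZMod 2) :
    symp m u (v + w) = symp m u v + symp m u w := by
  rw [symp_comm, symp_add_left, symp_comm m v u, symp_comm m w u]

lemma symp_self (m : ℕ) (u : Fin (2*m) → ZMod 2) : symp m u u = 0 := by
  unfold symp
  refine Finset.sum_eq_zero fun i _ => ?_
  rw [mul_comm]; exact CharTwo.add_self_eq_zero _

lemma th0_add (m : ℕ) (u v : Fin (2*m) → ZMod 2) :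
    th0 m (u + v) = th0 m u + th0 m v + symp m u v := by
  unfold th0 symp
  rw [← Finset.sum_add_distrib, ← Finset.sum_add_distrib]
  exact Finset.sum_congr rfl fun i _ => by simp [Pi.add_apply]; ring

def chi (x : ZMod 2) : ℤ := if x = 0 then 1 else -1

lemma chi_add (x y : ZMod 2) : chi (x + y) = chi x * chi y := by revert x y; decide

lemma chi_sum {ι : Type*} (s : Finset ι) (f : ι → ZMod 2) :
    chi (∑ i ∈ s, f i) = ∏ i ∈ s, chi (f i) := by
  induction s using Finset.cons_induction with
  | empty => simp [chi]
  | cons a s ha ih => rw [Finset.sum_cons, Finset.prod_cons, chi_add, ih]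

def pairEquiv (m : ℕ) : (Fin m → ZMod 2 × ZMod 2) ≃ (Fin (2*m) → ZMod 2) where
  toFun g j := if h : j.1 < m then (g ⟨j.1, h⟩).1 else (g ⟨j.1 - m, by omega⟩).2
  invFun x i := (x ⟨i.1, by omega⟩, x ⟨m + i.1, by omega⟩)
  left_inv g := by
    funext i
    have h1 : (i : ℕ) < m := i.2
    have h2 : ¬ (m + (i:ℕ) < m) := by omega
    ext <;> simp [h1, h2]
  right_inv x := by
    funext j
    by_cases h : (j : ℕ) < m
    · simp only [h, dif_pos]
    · simp only [h, dif_neg]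
      exact congrArg x (Fin.ext (by simp only [Fin.val_mk]; omega))

lemma singleGauss : ∀ α β : ZMod 2,
    (∑ uv : ZMod 2 × ZMod 2, chi (uv.1 * uv.2 + α * uv.1 + β * uv.2)) = 2 * chi (α * β) := by
  decide

def lo {m : ℕ} (i : Fin m) : Fin (2*m) := ⟨i.1, by omega⟩
def hi {m : ℕ} (i : Fin m) : Fin (2*m) := ⟨m + i.1, by omega⟩

lemma th0_eq (m : ℕ) (u : Fin (2*m) → ZMod 2) :
    th0 m u = ∑ i : Fin m, u (lo i) * u (hi i) := rfl

lemma symp_eq (m : ℕ) (u v : Fin (2*m) → ZMod 2) :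
    symp m u v = ∑ i : Fin m, (u (lo i) * v (hi i) + u (hi i) * v (lo i)) := rfl

def Ff (m : ℕ) (c : Fin (2*m) → ZMod 2) (i : Fin m) (uv : ZMod 2 × ZMod 2) : ℤ :=
  chi (uv.1 * uv.2 + c (hi i) * uv.1 + c (lo i) * uv.2)

lemma gauss (m : ℕ) (c : Fin (2*m) → ZMod 2) :
    ∑ x : Fin (2*m) → ZMod 2, chi (th0 m x + symp m c x) = 2^m * chi (th0 m c) := by
  have key : ∀ x : Fin (2*m) → ZMod 2, th0 m x + symp m c x =
      ∑ i : Fin m, (x (lo i) * x (hi i) + c (hi i) * x (lo i) + c (lo i) * x (hi i)) := by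
    intro x
    rw [th0_eq, symp_eq, ← Finset.sum_add_distrib]
    exact Finset.sum_congr rfl fun i _ => by ring
  have step1 : ∑ x : Fin (2*m) → ZMod 2, chi (th0 m x + symp m c x) =
      ∑ g : Fin m → ZMod 2 × ZMod 2, ∏ i : Fin m, Ff m c i (g i) := by
    rw [← Equiv.sum_comp (pairEquiv m) (fun x => chi (th0 m x + symp m c x))]
    refine Finset.sum_congr rfl fun g _ => ?_
    rw [key, chi_sum]
    refine Finset.prod_congr rfl fun i _ => ?_
    have h1 : (pairEquiv m g) (lo i) = (g i).1 := by
      simp [pairEquiv, lo, i.2]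
    have h2 : (pairEquiv m g) (hi i) = (g i).2 := by
      have hlt : ¬ (m + (i:ℕ) < m) := by omega
      simp only [pairEquiv, hi, Equiv.coe_fn_mk, Fin.val_mk, hlt, dif_neg]
      congr 1
      exact Fin.ext (by simp)
    rw [h1, h2]
    rfl
  have step2 : ∑ g : Fin m → ZMod 2 × ZMod 2, ∏ i : Fin m, Ff m c i (g i)
      = ∏ i : Fin m, ∑ uv : ZMod 2 × ZMod 2, Ff m c i uv := by
    rw [show (univ : Finset (Fin m → ZMod 2 × ZMod 2)) =
      Fintype.piFinset (fun _ => univ) from (Fintype.piFinset_univ).symm]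
    exact (Finset.prod_univ_sum _ _).symm
  rw [step1, step2]
  have hval : ∀ i : Fin m, (∑ uv : ZMod 2 × ZMod 2, Ff m c i uv) =
      2 * chi (c (lo i) * c (hi i)) := by
    intro i
    unfold Ff
    rw [singleGauss (c (hi i)) (c (lo i)), mul_comm (c (hi i))]
  rw [Finset.prod_congr rfl fun i _ => hval i, Finset.prod_mul_distrib,
    Finset.prod_const, ← chi_sum, ← th0_eq]
  simp

def esingle {n : ℕ} (K : Fin n) : Fin n → ZMod 2 := fun t => if t = K then 1 else 0

lemma symp_esingle_hi (m : ℕ) (a : Fin (2*m) → ZMod 2) (j : Fin m) :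
    symp m a (esingle (hi j)) = a (lo j) := by
  rw [symp_eq]
  rw [Finset.sum_eq_single j]
  · have h1 : hi (m := m) j = hi j := rfl
    have h2 : lo (m := m) j ≠ hi j := by
      simp only [lo, hi, ne_eq, Fin.mk.injEq]; omega
    simp [esingle, h2]
  · intro i _ hij
    have h1 : hi (m := m) i ≠ hi j := by
      simp only [hi, ne_eq, Fin.mk.injEq]
      exact fun h => hij (Fin.ext (by omega))
    have h2 : lo (m := m) i ≠ hi j := by
      simp only [lo, hi, ne_eq, Fin.mk.injEq]
      have := i.2; omega
    simp [esingle, h1, h2]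
  · simp

lemma symp_esingle_lo (m : ℕ) (a : Fin (2*m) → ZMod 2) (j : Fin m) :
    symp m a (esingle (lo j)) = a (hi j) := by
  rw [symp_eq]
  rw [Finset.sum_eq_single j]
  · have h2 : hi (m := m) j ≠ lo j := by
      simp only [lo, hi, ne_eq, Fin.mk.injEq]; have := j.2; omega
    simp [esingle, h2]
  · intro i _ hij
    have h1 : lo (m := m) i ≠ lo j := by
      simp only [lo, ne_eq, Fin.mk.injEq]
      exact fun h => hij (Fin.ext h)
    have h2 : hi (m := m) i ≠ lo j := by
      simp only [lo, hi, ne_eq, Fin.mk.injEq]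
      have := j.2; omega
    simp [esingle, h1, h2]
  · simp

lemma exists_symp_one (m : ℕ) (a : Fin (2*m) → ZMod 2) (ha : a ≠ 0) :
    ∃ y, symp m a y = 1 := by
  obtain ⟨t, ht⟩ : ∃ t, a t ≠ 0 := by
    by_contra h
    push_neg at h
    exact ha (funext fun t => h t)
  have hone : ∀ u : ZMod 2, u ≠ 0 → u = 1 := by decide
  by_cases h : (t : ℕ) < m
  · refine ⟨esingle (hi ⟨t.1, h⟩), ?_⟩
    rw [symp_esingle_hi]
    have : lo (m := m) ⟨t.1, h⟩ = t := Fin.ext rfl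
    rw [this]
    exact hone _ ht
  · refine ⟨esingle (lo ⟨t.1 - m, by have := t.2; omega⟩), ?_⟩
    rw [symp_esingle_lo]
    have : hi (m := m) ⟨t.1 - m, by have := t.2; omega⟩ = t := Fin.ext (by simp [hi]; omega)
    rw [this]
    exact hone _ ht

lemma chi_add_one (u : ZMod 2) : chi (u + 1) = - chi u := by revert u; decide

lemma linsum (m : ℕ) (a : Fin (2*m) → ZMod 2) (ha : a ≠ 0) :
    ∑ x : Fin (2*m) → ZMod 2, chi (symp m a x) = 0 := by
  obtain ⟨y, hy⟩ := exists_symp_one m a ha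
  have h1 : ∑ x : Fin (2*m) → ZMod 2, chi (symp m a (x + y)) =
      ∑ x : Fin (2*m) → ZMod 2, chi (symp m a x) :=
    Equiv.sum_comp (Equiv.addRight y) (fun x => chi (symp m a x))
  have h2 : ∀ x : Fin (2*m) → ZMod 2, chi (symp m a (x + y)) = - chi (symp m a x) := by
    intro x
    rw [symp_add_right, hy, chi_add_one]
  rw [Finset.sum_congr rfl fun x _ => h2 x, Finset.sum_neg_distrib] at h1
  linarith

lemma count_eq {P : (Fin (2*m) → ZMod 2) → Prop} [DecidablePred P]
    (f : (Fin (2*m) → ZMod 2) → ℤ) (c : ℤ)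
    (h : ∀ x, f x = if P x then c else 0) :
    ∑ x : Fin (2*m) → ZMod 2, f x = c * ((univ.filter P).card : ℤ) := by
  rw [Finset.sum_congr rfl fun x _ => h x, ← Finset.sum_filter, Finset.sum_const]
  push_cast
  ring

lemma cardV (m : ℕ) : (Fintype.card (Fin (2*m) → ZMod 2)) = 2^(2*m) := by
  rw [Fintype.card_fun]
  simp

lemma countS1 (m : ℕ) (d : Fin (2*m) → ZMod 2) :
    2 * (((univ : Finset (Fin (2*m) → ZMod 2)).filter (fun x => th m d x = 0)).card : ℤ)
      = 2^(2*m) + 2^m * chi (th0 m d) := by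
  have hpt : ∀ u : ZMod 2, 1 + chi u = if u = 0 then (2:ℤ) else 0 := by decide
  have h1 := count_eq (m := m) (P := fun x => th m d x = 0)
    (fun x => 1 + chi (th m d x)) 2 (fun x => hpt _)
  rw [← h1, Finset.sum_add_distrib, Finset.sum_const, Finset.card_univ, cardV]
  rw [show (fun x => chi (th m d x)) = fun x => chi (th0 m x + symp m d x) from rfl]
  rw [gauss m d]
  push_cast
  ring

lemma countS2 (m : ℕ) (d a : Fin (2*m) → ZMod 2) (ha : a ≠ 0) :
    4 * (((univ : Finset (Fin (2*m) → ZMod 2)).filter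
        (fun x => th m d x = 0 ∧ symp m a x = 0)).card : ℤ)
      = 2^(2*m) + 2^m * chi (th0 m d) + 2^m * chi (th0 m (d+a)) := by
  have hpt : ∀ u v : ZMod 2, (1 + chi u) * (1 + chi v)
      = if (u = 0 ∧ v = 0) then (4:ℤ) else 0 := by decide
  have h1 := count_eq (m := m) (P := fun x => th m d x = 0 ∧ symp m a x = 0)
    (fun x => (1 + chi (th m d x)) * (1 + chi (symp m a x))) 4 (fun x => hpt _ _)
  rw [← h1]
  have hx : ∀ x : Fin (2*m) → ZMod 2, (1 + chi (th m d x)) * (1 + chi (symp m a x))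
      = 1 + chi (th0 m x + symp m d x) + chi (symp m a x)
        + chi (th0 m x + symp m (d+a) x) := by
    intro x
    have h2 : chi (th0 m x + symp m (d+a) x)
        = chi (th0 m x + symp m d x) * chi (symp m a x) := by
      rw [← chi_add]; congr 1; rw [symp_add_left]; ring
    rw [show th m d x = th0 m x + symp m d x from rfl, h2]
    ring
  rw [Finset.sum_congr rfl fun x _ => hx x]
  simp only [Finset.sum_add_distrib, Finset.sum_const, Finset.card_univ, cardV,
    gauss m d, gauss m (d+a), linsum m a ha]
  push_cast
  ring

lemma countS3 (m : ℕ) (d a b : Fin (2*m) → ZMod 2) (ha : a ≠ 0) (hb : b ≠ 0)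
    (hab : a + b ≠ 0) :
    8 * (((univ : Finset (Fin (2*m) → ZMod 2)).filter
        (fun x => th m d x = 0 ∧ symp m a x = 0 ∧ symp m b x = 0)).card : ℤ)
      = 2^(2*m) + 2^m * (chi (th0 m d) + chi (th0 m (d+a)) + chi (th0 m (d+b))
          + chi (th0 m (d+a+b))) := by
  have hpt : ∀ u v w : ZMod 2, (1 + chi u) * (1 + chi v) * (1 + chi w)
      = if (u = 0 ∧ v = 0 ∧ w = 0) then (8:ℤ) else 0 := by decide
  have h1 := count_eq (m := m) (P := fun x => th m d x = 0 ∧ symp m a x = 0 ∧ symp m b x = 0)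
    (fun x => (1 + chi (th m d x)) * (1 + chi (symp m a x)) * (1 + chi (symp m b x)))
    8 (fun x => hpt _ _ _)
  rw [← h1]
  have hx : ∀ x : Fin (2*m) → ZMod 2,
      (1 + chi (th m d x)) * (1 + chi (symp m a x)) * (1 + chi (symp m b x))
      = 1 + chi (th0 m x + symp m d x) + chi (symp m a x) + chi (symp m b x)
        + chi (th0 m x + symp m (d+a) x) + chi (th0 m x + symp m (d+b) x)
        + chi (symp m (a+b) x) + chi (th0 m x + symp m (d+a+b) x) := by
    intro x
    have h2 : chi (th0 m x + symp m (d+a) x)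
        = chi (th0 m x + symp m d x) * chi (symp m a x) := by
      rw [← chi_add]; congr 1; rw [symp_add_left]; ring
    have h3 : chi (th0 m x + symp m (d+b) x)
        = chi (th0 m x + symp m d x) * chi (symp m b x) := by
      rw [← chi_add]; congr 1; rw [symp_add_left]; ring
    have h4 : chi (symp m (a+b) x) = chi (symp m a x) * chi (symp m b x) := by
      rw [← chi_add]; congr 1; exact symp_add_left m a b x
    have h5 : chi (th0 m x + symp m (d+a+b) x)
        = chi (th0 m x + symp m d x) * chi (symp m a x) * chi (symp m b x) := by
      rw [← chi_add, ← chi_add]; congr 1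
      rw [symp_add_left, symp_add_left]; ring
    rw [show th m d x = th0 m x + symp m d x from rfl, h2, h3, h4, h5]
    ring
  rw [Finset.sum_congr rfl fun x _ => hx x]
  simp only [Finset.sum_add_distrib, Finset.sum_const, Finset.card_univ, cardV,
    gauss m d, gauss m (d+a), gauss m (d+b), gauss m (d+a+b),
    linsum m a ha, linsum m b hb, linsum m (a+b) hab]
  push_cast
  ring

lemma th_zero (m : ℕ) (d : Fin (2*m) → ZMod 2) : th m d 0 = 0 := by
  simp [th, th0, symp]

lemma symp_zero_right (m : ℕ) (a : Fin (2*m) → ZMod 2) : symp m a 0 = 0 := by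
  simp [symp]

lemma th0_shift (m : ℕ) (d a : Fin (2*m) → ZMod 2) (hA : th m d a = 0) :
    th0 m (d + a) = th0 m d := by
  have : th0 m a + symp m d a = 0 := hA
  rw [th0_add, add_assoc, this, add_zero]

lemma th0_shift2 (m : ℕ) (d a b : Fin (2*m) → ZMod 2) (hA : th m d a = 0)
    (hB : th m d b = 0) : th0 m (d + a + b) = th0 m d + symp m a b := by
  have hb' : th0 m b + symp m d b = 0 := hB
  rw [th0_add, th0_shift m d a hA, symp_add_left]
  have : th0 m d + th0 m b + (symp m d b + symp m a b)
      = th0 m d + (th0 m b + symp m d b) + symp m a b := by ring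
  rw [this, hb', add_zero]

set_option maxHeartbeats 1000000 in
/-- The orthogonal polar graph `Γ(O^ε(2m,2))`: vertices the nonzero `a` with `ϑ_d(a) = 0`,
distinct `a, b` adjacent iff `⟨a,b⟩ = 0`, is strongly regular with parameters
`((2^m-ε)(2^{m-1}+ε), 2(2^{m-1}-ε)(2^{m-2}+ε), 4(2^{m-2}-ε)(2^{m-3}+ε)+1,
(2^{m-1}-ε)(2^{m-2}+ε))`. -/
theorem stmt_7 (m : ℕ) (hm : 3 ≤ m) (d : Fin (2*m) → ZMod 2) :
    let ε : ℤ := if th0 m d = 0 then 1 else -1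
    let X := {a : Fin (2*m) → ZMod 2 // a ≠ 0 ∧ th m d a = 0}
    let Adj : X → X → Prop := fun a b => a ≠ b ∧ symp m a.1 b.1 = 0
    -- v
    (Nat.card X : ℤ) = (2^m - ε) * (2^(m - 1) + ε)
    -- k
    ∧ (∀ a : X, (Nat.card {b : X // Adj a b} : ℤ) = 2 * (2^(m - 1) - ε) * (2^(m - 2) + ε))
    -- λ
    ∧ (∀ a b : X, Adj a b →
        (Nat.card {c : X // Adj a c ∧ Adj b c} : ℤ)
          = 4 * (2^(m - 2) - ε) * (2^(m - 3) + ε) + 1)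
    -- μ
    ∧ (∀ a b : X, a ≠ b → ¬ Adj a b →
        (Nat.card {c : X // Adj a c ∧ Adj b c} : ℤ) = (2^(m - 1) - ε) * (2^(m - 2) + ε)) := by
  intro ε X Adj
  have hε : ε = chi (th0 m d) := rfl
  have hεc : ε = 1 ∨ ε = -1 := by rw [hε]; unfold chi; split <;> simp
  set B : ℤ := 2^(m-3) with hB
  have hB1 : (2:ℤ)^(m-2) = 2*B := by rw [show m-2 = 1+(m-3) by omega, pow_add]; ring
  have hB2 : (2:ℤ)^(m-1) = 4*B := by rw [show m-1 = 2+(m-3) by omega, pow_add]; ring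
  have hB3 : (2:ℤ)^m = 8*B := by rw [show m = 3+(m-3) by omega, pow_add]; ring
  have hB4 : (2:ℤ)^(2*m) = 64*(B*B) := by
    rw [show 2*m = (m-3)+((m-3)+6) by omega, pow_add, pow_add]; ring
  refine ⟨?_, ?_, ?_, ?_⟩
  · -- v
    have hcard : Nat.card X
        = ((univ : Finset (Fin (2*m) → ZMod 2)).filter
            (fun x => x ≠ 0 ∧ th m d x = 0)).card := by
      rw [Nat.card_eq_fintype_card, Fintype.card_subtype]
    have h0 : (0 : Fin (2*m) → ZMod 2) ∈ (univ : Finset (Fin (2*m) → ZMod 2)).filter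
        (fun x => th m d x = 0) := by simp [th_zero]
    have hfe : (univ : Finset (Fin (2*m) → ZMod 2)).filter (fun x => x ≠ 0 ∧ th m d x = 0)
        = ((univ : Finset (Fin (2*m) → ZMod 2)).filter (fun x => th m d x = 0)) \ {0} := by
      ext x; simp; tauto
    have hsub : ({0} : Finset (Fin (2*m) → ZMod 2)) ⊆
        (univ : Finset (Fin (2*m) → ZMod 2)).filter (fun x => th m d x = 0) := by
      simpa using h0
    have hle : 1 ≤ ((univ : Finset (Fin (2*m) → ZMod 2)).filter
        (fun x => th m d x = 0)).card := by
      simpa using Finset.card_le_card hsub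
    have hcs := countS1 m d
    rw [← hε] at hcs
    rw [hcard, hfe, Finset.card_sdiff_of_subset hsub, Finset.card_singleton]
    rw [Nat.cast_sub hle, Nat.cast_one]
    simp only [hB1, hB2, hB3, hB4] at hcs ⊢
    rcases hεc with h | h <;> rw [h] at hcs ⊢ <;> nlinarith [hcs]
  · -- k
    intro a
    have e2 : {b : X // Adj a b} ≃ {b : Fin (2*m) → ZMod 2 //
        (th m d b = 0 ∧ symp m a.1 b = 0) ∧ b ≠ 0 ∧ b ≠ a.1} :=
      { toFun := fun bb => ⟨bb.1.1, ⟨bb.1.2.2, bb.2.2⟩, bb.1.2.1,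
          fun h => bb.2.1 (Subtype.ext h.symm)⟩
        invFun := fun bb => ⟨⟨bb.1, bb.2.2.1, bb.2.1.1⟩,
          fun h => bb.2.2.2 (congrArg Subtype.val h).symm, bb.2.1.2⟩
        left_inv := fun bb => Subtype.ext (Subtype.ext rfl)
        right_inv := fun bb => Subtype.ext rfl }
    rw [Nat.card_congr e2, Nat.card_eq_fintype_card, Fintype.card_subtype]
    set S2 := (univ : Finset (Fin (2*m) → ZMod 2)).filter
      (fun x => th m d x = 0 ∧ symp m a.1 x = 0) with hS2
    have hfe : (univ : Finset (Fin (2*m) → ZMod 2)).filter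
        (fun x => (th m d x = 0 ∧ symp m a.1 x = 0) ∧ x ≠ 0 ∧ x ≠ a.1)
        = S2 \ {0, a.1} := by
      ext x
      simp only [hS2, Finset.mem_filter, Finset.mem_univ, true_and, Finset.mem_sdiff,
        Finset.mem_insert, Finset.mem_singleton, ne_eq]
      tauto
    have hsub : ({0, a.1} : Finset (Fin (2*m) → ZMod 2)) ⊆ S2 := by
      rw [hS2, Finset.insert_subset_iff, Finset.singleton_subset_iff]
      constructor
      · simp [th_zero, symp_zero_right]
      · simp [a.2.2, symp_self]
    have hpair : ({0, a.1} : Finset (Fin (2*m) → ZMod 2)).card = 2 :=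
      Finset.card_pair (fun h => a.2.1 h.symm)
    have hle : 2 ≤ S2.card := by have := Finset.card_le_card hsub; omega
    have hcs := countS2 m d a.1 a.2.1
    rw [th0_shift m d a.1 a.2.2, ← hε] at hcs
    simp only [← hS2] at hcs
    rw [hfe, Finset.card_sdiff_of_subset hsub, hpair, Nat.cast_sub hle, Nat.cast_two]
    simp only [hB1, hB2, hB3, hB4] at hcs ⊢
    rcases hεc with h | h <;> rw [h] at hcs ⊢ <;> nlinarith [hcs]
  · -- lambda
    intro a b hAdj
    have hab : a.1 ≠ b.1 := fun h => hAdj.1 (Subtype.ext h)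
    have hsab : symp m a.1 b.1 = 0 := hAdj.2
    have hab0 : a.1 + b.1 ≠ 0 := fun h => hab (funext fun t => by
      have := congrFun h t
      simp only [Pi.add_apply, Pi.zero_apply] at this
      revert this
      exact (by decide : ∀ u v : ZMod 2, u + v = 0 → u = v) _ _)
    have e3 : {c : X // Adj a c ∧ Adj b c} ≃ {c : Fin (2*m) → ZMod 2 //
        (th m d c = 0 ∧ symp m a.1 c = 0 ∧ symp m b.1 c = 0) ∧ c ≠ 0 ∧ c ≠ a.1 ∧ c ≠ b.1} :=
      { toFun := fun cc => ⟨cc.1.1, ⟨cc.1.2.2, cc.2.1.2, cc.2.2.2⟩, cc.1.2.1,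
          fun h => cc.2.1.1 (Subtype.ext h.symm), fun h => cc.2.2.1 (Subtype.ext h.symm)⟩
        invFun := fun cc => ⟨⟨cc.1, cc.2.2.1, cc.2.1.1⟩,
          ⟨fun h => cc.2.2.2.1 (congrArg Subtype.val h).symm, cc.2.1.2.1⟩,
          ⟨fun h => cc.2.2.2.2 (congrArg Subtype.val h).symm, cc.2.1.2.2⟩⟩
        left_inv := fun cc => Subtype.ext (Subtype.ext rfl)
        right_inv := fun cc => Subtype.ext rfl }
    rw [Nat.card_congr e3, Nat.card_eq_fintype_card, Fintype.card_subtype]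
    set S3 := (univ : Finset (Fin (2*m) → ZMod 2)).filter
      (fun x => th m d x = 0 ∧ symp m a.1 x = 0 ∧ symp m b.1 x = 0) with hS3
    have hfe : (univ : Finset (Fin (2*m) → ZMod 2)).filter
        (fun x => (th m d x = 0 ∧ symp m a.1 x = 0 ∧ symp m b.1 x = 0)
          ∧ x ≠ 0 ∧ x ≠ a.1 ∧ x ≠ b.1)
        = S3 \ {0, a.1, b.1} := by
      ext x
      simp only [hS3, Finset.mem_filter, Finset.mem_univ, true_and, Finset.mem_sdiff,
        Finset.mem_insert, Finset.mem_singleton, ne_eq]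
      constructor
      · rintro ⟨⟨h1, h2, h3⟩, h0, ha4, hb5⟩
        exact ⟨⟨h1, h2, h3⟩, by rintro (h | h | h); exacts [h0 h, ha4 h, hb5 h]⟩
      · rintro ⟨⟨h1, h2, h3⟩, hn⟩
        exact ⟨⟨h1, h2, h3⟩, fun h => hn (Or.inl h), fun h => hn (Or.inr (Or.inl h)),
          fun h => hn (Or.inr (Or.inr h))⟩
    have hsub : ({0, a.1, b.1} : Finset (Fin (2*m) → ZMod 2)) ⊆ S3 := by
      rw [hS3, Finset.insert_subset_iff, Finset.insert_subset_iff,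
        Finset.singleton_subset_iff]
      refine ⟨?_, ?_, ?_⟩
      · simp [th_zero, symp_zero_right]
      · simp only [Finset.mem_filter, Finset.mem_univ, true_and]
        exact ⟨a.2.2, symp_self m a.1, by rw [symp_comm, hsab]⟩
      · simp only [Finset.mem_filter, Finset.mem_univ, true_and]
        exact ⟨b.2.2, hsab, symp_self m b.1⟩
    have htriple : ({0, a.1, b.1} : Finset (Fin (2*m) → ZMod 2)).card = 3 := by
      rw [Finset.card_insert_of_notMem (by
        simp only [Finset.mem_insert, Finset.mem_singleton]
        push_neg
        exact ⟨fun h => a.2.1 h.symm, fun h => b.2.1 h.symm⟩),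
        Finset.card_pair hab]
    have hle : 3 ≤ S3.card := by have := Finset.card_le_card hsub; omega
    have hcs := countS3 m d a.1 b.1 a.2.1 b.2.1 hab0
    rw [th0_shift m d a.1 a.2.2, th0_shift m d b.1 b.2.2,
      th0_shift2 m d a.1 b.1 a.2.2 b.2.2, hsab, add_zero, ← hε] at hcs
    simp only [← hS3] at hcs
    rw [hfe, Finset.card_sdiff_of_subset hsub, htriple, Nat.cast_sub hle]
    simp only [hB1, hB2, hB3, hB4] at hcs ⊢
    rcases hεc with h | h <;> rw [h] at hcs ⊢ <;> push_cast <;> nlinarith [hcs]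
  · -- mu
    intro a b hne hna
    have hab : a.1 ≠ b.1 := fun h => hne (Subtype.ext h)
    have hsab : symp m a.1 b.1 = 1 := by
      have h0 : symp m a.1 b.1 ≠ 0 := fun h => hna ⟨hne, h⟩
      exact (by decide : ∀ u : ZMod 2, u ≠ 0 → u = 1) _ h0
    have hab0 : a.1 + b.1 ≠ 0 := fun h => hab (funext fun t => by
      have := congrFun h t
      simp only [Pi.add_apply, Pi.zero_apply] at this
      revert this
      exact (by decide : ∀ u v : ZMod 2, u + v = 0 → u = v) _ _)
    have e3 : {c : X // Adj a c ∧ Adj b c} ≃ {c : Fin (2*m) → ZMod 2 //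
        (th m d c = 0 ∧ symp m a.1 c = 0 ∧ symp m b.1 c = 0) ∧ c ≠ 0 ∧ c ≠ a.1 ∧ c ≠ b.1} :=
      { toFun := fun cc => ⟨cc.1.1, ⟨cc.1.2.2, cc.2.1.2, cc.2.2.2⟩, cc.1.2.1,
          fun h => cc.2.1.1 (Subtype.ext h.symm), fun h => cc.2.2.1 (Subtype.ext h.symm)⟩
        invFun := fun cc => ⟨⟨cc.1, cc.2.2.1, cc.2.1.1⟩,
          ⟨fun h => cc.2.2.2.1 (congrArg Subtype.val h).symm, cc.2.1.2.1⟩,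
          ⟨fun h => cc.2.2.2.2 (congrArg Subtype.val h).symm, cc.2.1.2.2⟩⟩
        left_inv := fun cc => Subtype.ext (Subtype.ext rfl)
        right_inv := fun cc => Subtype.ext rfl }
    rw [Nat.card_congr e3, Nat.card_eq_fintype_card, Fintype.card_subtype]
    set S3 := (univ : Finset (Fin (2*m) → ZMod 2)).filter
      (fun x => th m d x = 0 ∧ symp m a.1 x = 0 ∧ symp m b.1 x = 0) with hS3
    have haS : a.1 ∉ S3 := by
      rw [hS3]
      simp only [Finset.mem_filter, Finset.mem_univ, true_and, not_and]
      intro _ _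
      rw [symp_comm, hsab]
      exact one_ne_zero
    have hbS : b.1 ∉ S3 := by
      rw [hS3]
      simp only [Finset.mem_filter, Finset.mem_univ, true_and, not_and]
      intro _ h
      rw [hsab] at h
      exact absurd h one_ne_zero
    have hfe : (univ : Finset (Fin (2*m) → ZMod 2)).filter
        (fun x => (th m d x = 0 ∧ symp m a.1 x = 0 ∧ symp m b.1 x = 0)
          ∧ x ≠ 0 ∧ x ≠ a.1 ∧ x ≠ b.1)
        = S3 \ {0} := by
      ext x
      simp only [hS3, Finset.mem_filter, Finset.mem_univ, true_and, Finset.mem_sdiff,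
        Finset.mem_singleton, ne_eq]
      constructor
      · rintro ⟨h1, h2, _, _⟩; exact ⟨h1, h2⟩
      · rintro ⟨⟨h1, h2, h3⟩, h0⟩
        refine ⟨⟨h1, h2, h3⟩, h0, fun h => ?_, fun h => ?_⟩
        · subst h
          rw [symp_comm, hsab] at h3
          exact one_ne_zero h3
        · subst h
          rw [hsab] at h2
          exact one_ne_zero h2
    have hsub : ({0} : Finset (Fin (2*m) → ZMod 2)) ⊆ S3 := by
      rw [hS3, Finset.singleton_subset_iff]
      simp [th_zero, symp_zero_right]
    have hle : 1 ≤ S3.card := Finset.card_pos.mpr ⟨0, hsub (Finset.mem_singleton_self 0)⟩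
    have hcs := countS3 m d a.1 b.1 a.2.1 b.2.1 hab0
    rw [th0_shift m d a.1 a.2.2, th0_shift m d b.1 b.2.2,
      th0_shift2 m d a.1 b.1 a.2.2 b.2.2, hsab, chi_add_one, ← hε] at hcs
    simp only [← hS3] at hcs
    rw [hfe, Finset.card_sdiff_of_subset hsub, Finset.card_singleton, Nat.cast_sub hle]
    simp only [hB1, hB2, hB3, hB4] at hcs ⊢
    rcases hεc with h | h <;> rw [h] at hcs ⊢ <;> push_cast <;> nlinarith [hcs]
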